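/- arXiv:2401.07602 — 4 statements merged into one kernel-verified Lean document; each statement's English description precedes it below -/
import Mathlib

section
/- If A is a Z-tensor of order m and dimension n (i.e., A = sI - B with B entrywise nonnegative and s > 0) and there exists a positive vector x with A x^{m-1} > 0 entrywise, then A is a nonsingular M-tensor, i.e., s > ρ(B) where ρ(B) is the spectral radius of B. -/
open Finset Matrix

/-- Identity tensor of order `m`, dimension `n`: diagonal entries 1, others 0. -/
def idT (m n : ℕ) [NeZero m] : (Fin m → Fin n) → ℝ :=
  fun g => if ∀ k, g k = g 0 then 1 else 0

/-- Tensor–vector product `(A x^{m-1})_i = Σ_{i2..im} a_{i i2..im} x_{i2}⋯x_{im}`. -/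
def tvp {m n : ℕ} [NeZero m] (A : (Fin m → Fin n) → ℝ) (x : Fin n → ℝ) : Fin n → ℝ :=
  fun i => ∑ g : Fin m → Fin n,
    if g 0 = i then A g * ∏ k ∈ Finset.univ.erase 0, x (g k) else 0

/-- Complex tensor–vector product (for eigenvalues). -/
noncomputable def tvpC {m n : ℕ} [NeZero m] (A : (Fin m → Fin n) → ℝ) (x : Fin n → ℂ) : Fin n → ℂ :=
  fun i => ∑ g : Fin m → Fin n,
    if g 0 = i then (A g : ℂ) * ∏ k ∈ Finset.univ.erase 0, x (g k) else 0

/-- `lam` is an eigenvalue of the tensor `B`: `B x^{m-1} = lam x^{[m-1]}` for some `x ≠ 0`. -/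
def tEig {m n : ℕ} [NeZero m] (B : (Fin m → Fin n) → ℝ) (lam : ℂ) : Prop :=
  ∃ x : Fin n → ℂ, x ≠ 0 ∧ ∀ i, tvpC B x i = lam * x i ^ (m - 1)

/-- Tensor spectral radius. -/
noncomputable def tRho {m n : ℕ} [NeZero m] (B : (Fin m → Fin n) → ℝ) : ℝ :=
  sSup {r : ℝ | ∃ lam : ℂ, tEig B lam ∧ r = ‖lam‖}

/-- `A` is a nonsingular M-tensor: `A = s I - B`, `B ≥ 0`, `s > ρ(B)`. -/
def isNonsingMTensor {m n : ℕ} [NeZero m] (A : (Fin m → Fin n) → ℝ) : Prop :=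
  ∃ (s : ℝ) (B : (Fin m → Fin n) → ℝ),
    (∀ g, 0 ≤ B g) ∧ tRho B < s ∧ A = s • idT m n - B

/-- Majorization matrix `(M(A))_{ij} = a_{ijj...j}`. -/
def majMat {m n : ℕ} [NeZero m] (A : (Fin m → Fin n) → ℝ) : Matrix (Fin n) (Fin n) ℝ :=
  Matrix.of fun i j => A (fun k => if k = 0 then i else j)

/-- Matrix–tensor product `(P·A)_{i1 i2..im} = Σ_j P_{i1 j} a_{j i2..im}`. -/
def matTen {m n : ℕ} [NeZero m] (P : Matrix (Fin n) (Fin n) ℝ)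
    (A : (Fin m → Fin n) → ℝ) : (Fin m → Fin n) → ℝ :=
  fun g => ∑ j, P (g 0) j * A (Function.update g 0 j)

/-- `A` is row diagonal: entries vanish unless all indices `i2..im` coincide. -/
def rowDiag {m n : ℕ} [NeZero m] (A : (Fin m → Fin n) → ℝ) : Prop :=
  ∀ g : Fin m → Fin n, (∃ k l : Fin m, k ≠ 0 ∧ l ≠ 0 ∧ g k ≠ g l) → A g = 0

/-- Matrix eigenvalue over ℂ for a real matrix. -/
def matEig {n : ℕ} (N : Matrix (Fin n) (Fin n) ℝ) (lam : ℂ) : Prop :=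
  ∃ v : Fin n → ℂ, v ≠ 0 ∧ (N.map (fun a => (a : ℂ))) *ᵥ v = lam • v

/-- Matrix spectral radius. -/
noncomputable def matRho {n : ℕ} (N : Matrix (Fin n) (Fin n) ℝ) : ℝ :=
  sSup {r : ℝ | ∃ lam : ℂ, matEig N lam ∧ r = ‖lam‖}

/-- Nonsingular M-matrix: `M = s I - N`, `N ≥ 0`, `s > ρ(N)`. -/
def isNonsingMMatrix {n : ℕ} (M : Matrix (Fin n) (Fin n) ℝ) : Prop :=
  ∃ (s : ℝ) (N : Matrix (Fin n) (Fin n) ℝ),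
    (∀ i j, 0 ≤ N i j) ∧ matRho N < s ∧ M = s • (1 : Matrix (Fin n) (Fin n) ℝ) - N

/-! A positive vector `x` with `B x^{m-1} < s x^{[m-1]}` bounds every eigenvalue of `B ≥ 0`
in Collatz–Wielandt fashion: if `B y^{m-1} = λ y^{[m-1]}`, scale `x` to the smallest `c x`
dominating `|y|` entrywise; at a coordinate `i` where `|y_i| = c x_i`, the triangle inequality
gives `|λ| (c x_i)^{m-1} ≤ (B (c x)^{m-1})_i = c^{m-1} (B x^{m-1})_i ≤ r (c x_i)^{m-1}`
for any `r` with `B x^{m-1} ≤ r x^{[m-1]}`, and finitely many strict inequalities leave room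
for such an `r < s`. -/

lemma card_univ_erase_zero (m : ℕ) [NeZero m] : (univ.erase (0 : Fin m)).card = m - 1 := by
  rw [card_erase_of_mem (mem_univ _), card_univ, Fintype.card_fin]

section TensorVectorProduct

variable {m n : ℕ} [NeZero m]

lemma tvp_idT (x : Fin n → ℝ) (i : Fin n) : tvp (idT m n) x i = x i ^ (m - 1) := by
  unfold tvp
  rw [sum_eq_single (fun _ => i)]
  · simp [idT, prod_const]
  · intro g _ hg
    by_cases h0 : g 0 = i
    · have hnd : ¬ ∀ k, g k = g 0 := fun hall => hg (funext fun k => by rw [hall k, h0])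
      simp only [idT, if_neg hnd, zero_mul, if_pos h0]
    · simp [h0]
  · simp

lemma tvp_smul_idT_sub (s : ℝ) (B : (Fin m → Fin n) → ℝ) (x : Fin n → ℝ) (i : Fin n) :
    tvp (s • idT m n - B) x i = s * x i ^ (m - 1) - tvp B x i := by
  rw [← tvp_idT x i]
  unfold tvp
  rw [mul_sum, ← sum_sub_distrib]
  refine sum_congr rfl fun g _ => ?_
  simp only [Pi.sub_apply, Pi.smul_apply, smul_eq_mul]
  split_ifs <;> ring

lemma tvp_smul_right (B : (Fin m → Fin n) → ℝ) (c : ℝ) (x : Fin n → ℝ) (i : Fin n) :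
    tvp B (c • x) i = c ^ (m - 1) * tvp B x i := by
  unfold tvp
  rw [mul_sum]
  refine sum_congr rfl fun g _ => ?_
  split_ifs
  · simp only [Pi.smul_apply, smul_eq_mul, prod_mul_distrib, prod_const,
      card_univ_erase_zero]
    ring
  · simp

lemma norm_tvpC_le_tvp {B : (Fin m → Fin n) → ℝ} (hB : ∀ g, 0 ≤ B g) {y : Fin n → ℂ}
    {x : Fin n → ℝ} (hyx : ∀ j, ‖y j‖ ≤ x j) (i : Fin n) : ‖tvpC B y i‖ ≤ tvp B x i := by
  refine (norm_sum_le _ _).trans (sum_le_sum fun g _ => ?_)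
  split_ifs
  · rw [norm_mul, Complex.norm_real, Real.norm_of_nonneg (hB g), norm_prod]
    exact mul_le_mul_of_nonneg_left
      (prod_le_prod (fun _ _ => norm_nonneg _) fun _ _ => hyx _) (hB g)
  · simp

lemma norm_le_of_tEig {B : (Fin m → Fin n) → ℝ} (hB : ∀ g, 0 ≤ B g) {x : Fin n → ℝ}
    (hx : ∀ i, 0 < x i) {r : ℝ} (hBx : ∀ i, tvp B x i ≤ r * x i ^ (m - 1)) {lam : ℂ}
    (hlam : tEig B lam) : ‖lam‖ ≤ r := by
  obtain ⟨y, hy0, hyeig⟩ := hlam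
  obtain ⟨j, hj⟩ := Function.ne_iff.mp hy0
  have : Nonempty (Fin n) := ⟨j⟩
  obtain ⟨i, hi⟩ := Finite.exists_max fun j => ‖y j‖ / x j
  set c := ‖y i‖ / x i
  have hyc : ∀ j, ‖y j‖ ≤ (c • x) j := fun j =>
    (div_le_iff₀ (hx j)).1 (hi j)
  have hc : 0 < c := (div_pos (norm_pos_iff.2 hj) (hx j)).trans_le (hi j)
  have hyi : ‖y i‖ = c * x i := (div_mul_cancel₀ _ (hx i).ne').symm
  have hpos : 0 < (c * x i) ^ (m - 1) := pow_pos (mul_pos hc (hx i)) _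
  refine le_of_mul_le_mul_right ?_ hpos
  calc ‖lam‖ * (c * x i) ^ (m - 1) = ‖tvpC B y i‖ := by
        rw [hyeig i, norm_mul, norm_pow, hyi]
    _ ≤ tvp B (c • x) i := norm_tvpC_le_tvp hB hyc i
    _ = c ^ (m - 1) * tvp B x i := tvp_smul_right B c x i
    _ ≤ c ^ (m - 1) * (r * x i ^ (m - 1)) := by gcongr; exact hBx i
    _ = r * (c * x i) ^ (m - 1) := by ring

lemma tRho_le_of_tvp_le {B : (Fin m → Fin n) → ℝ} (hB : ∀ g, 0 ≤ B g) {x : Fin n → ℝ}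
    (hx : ∀ i, 0 < x i) {r : ℝ} (hr : 0 ≤ r) (hBx : ∀ i, tvp B x i ≤ r * x i ^ (m - 1)) :
    tRho B ≤ r :=
  Real.sSup_le (by rintro _ ⟨lam, hlam, rfl⟩; exact norm_le_of_tEig hB hx hBx hlam) hr

end TensorVectorProduct

lemma exists_nonneg_lt_forall_le_mul {ι : Type*} [Finite ι] {f g : ι → ℝ} {s : ℝ}
    (hs : 0 < s) (hg : ∀ i, 0 < g i) (hfg : ∀ i, f i < s * g i) :
    ∃ r, 0 ≤ r ∧ r < s ∧ ∀ i, f i ≤ r * g i := by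
  rcases isEmpty_or_nonempty ι with hι | hι
  · exact ⟨0, le_rfl, hs, isEmptyElim⟩
  obtain ⟨i₀, hi₀⟩ := Finite.exists_max fun i => f i / g i
  exact ⟨max 0 (f i₀ / g i₀), le_max_left _ _, max_lt hs ((div_lt_iff₀ (hg i₀)).2 (hfg i₀)),
    fun i => (div_le_iff₀ (hg i)).1 ((hi₀ i).trans (le_max_right _ _))⟩

theorem stmt0_general {m n : ℕ} [NeZero m]
    (s : ℝ) (B A : (Fin m → Fin n) → ℝ)
    (hB : ∀ g, 0 ≤ B g) (hs : 0 < s) (hA : A = s • idT m n - B)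
    (x : Fin n → ℝ) (hx : ∀ i, 0 < x i) (hAx : ∀ i, 0 < tvp A x i) :
    tRho B < s := by
  have hBx : ∀ i, tvp B x i < s * x i ^ (m - 1) := fun i => by
    have := hAx i
    rw [hA, tvp_smul_idT_sub] at this
    linarith
  obtain ⟨r, hr, hrs, hBr⟩ :=
    exists_nonneg_lt_forall_le_mul hs (fun i => pow_pos (hx i) (m - 1)) hBx
  exact (tRho_le_of_tvp_le hB hx hr hBr).trans_lt hrs

theorem stmt0 {m n : ℕ} [NeZero m] (hm : 2 ≤ m)
    (s : ℝ) (B A : (Fin m → Fin n) → ℝ)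
    (hB : ∀ g, 0 ≤ B g) (hs : 0 < s) (hA : A = s • idT m n - B)
    (x : Fin n → ℝ) (hx : ∀ i, 0 < x i) (hAx : ∀ i, 0 < tvp A x i) :
    tRho B < s :=
  stmt0_general s B A hB hs hA x hx hAx
end

section
/- If A is a nonsingular M-tensor of order m and dimension n, then its majorization matrix M(A), defined by (M(A))_{ij} = a_{i j j ... j}, is a nonsingular M-matrix. -/
open Finset Matrix

/-! Write `A = s I - B`. Then `M(A) = s I - M(B)` with `M(B) ≥ 0`, and since the entries of `M(B)`
are among those of `B`, `M(B) x^[m-1] ≤ B x^(m-1)` for every `x ≥ 0`. So it suffices to find `x > 0`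
with `B x^(m-1) < s x^[m-1]`: then `w = x^[m-1] > 0` satisfies `M(B) w < s w`, and the
Collatz–Wielandt bound gives `ρ(M(B)) < s`.

If there were no such `x`, the positive tensors `B + 1/(k+1)` would have positive eigenvectors in
the simplex with eigenvalues `≥ s`, and a limit point of these would be a nonnegative eigenvector of
`B` with eigenvalue `≥ s > ρ(B)`. A positive tensor `C` has a positive eigenvector: minimise
`max_i (C x^(m-1))_i / x_i^(m-1)` over a compact part of the simplex bounded away from its boundary;
at a minimiser `x` that is not an eigenvector, the normalised `(m-1)`-th root of `C x^(m-1)` stays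
in that part and does strictly better. -/

open Filter Topology

section Tensor

variable {m n : ℕ} [NeZero m]

def majIndex (i j : Fin n) : Fin m → Fin n := fun k => if k = 0 then i else j

@[simp]
lemma majIndex_zero (i j : Fin n) : majIndex (m := m) i j 0 = i := if_pos rfl

lemma majIndex_injective (hm : 2 ≤ m) (i : Fin n) :
    Function.Injective (majIndex (m := m) i) := fun j j' h => by
  simpa [majIndex, Fin.ext_iff] using congrFun h ⟨1, hm⟩

lemma prod_erase_zero_majIndex {M : Type*} [CommMonoid M] (y : Fin n → M) (i j : Fin n) :
    ∏ k ∈ univ.erase (0 : Fin m), y (majIndex i j k) = y j ^ (m - 1) := by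
  rw [Finset.prod_congr rfl fun k hk => by rw [majIndex, if_neg (Finset.ne_of_mem_erase hk)],
    Finset.prod_const, Finset.card_erase_of_mem (mem_univ _), card_univ, Fintype.card_fin]

lemma tvp_nonneg {B : (Fin m → Fin n) → ℝ} (hB : ∀ g, 0 ≤ B g) {x : Fin n → ℝ}
    (hx : ∀ l, 0 ≤ x l) (i : Fin n) : 0 ≤ tvp B x i :=
  Finset.sum_nonneg fun g _ => by
    split_ifs
    exacts [mul_nonneg (hB g) (Finset.prod_nonneg fun k _ => hx _), le_rfl]

lemma tvp_mono {B C : (Fin m → Fin n) → ℝ} (hBC : ∀ g, B g ≤ C g) {x : Fin n → ℝ}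
    (hx : ∀ l, 0 ≤ x l) (i : Fin n) : tvp B x i ≤ tvp C x i :=
  Finset.sum_le_sum fun g _ => by
    split_ifs
    exacts [mul_le_mul_of_nonneg_right (hBC g) (Finset.prod_nonneg fun k _ => hx _), le_rfl]

lemma tvp_smul (C : (Fin m → Fin n) → ℝ) (a : ℝ) (x : Fin n → ℝ) (i : Fin n) :
    tvp C (a • x) i = a ^ (m - 1) * tvp C x i := by
  simp only [tvp, Finset.mul_sum, Pi.smul_apply, smul_eq_mul, Finset.prod_mul_distrib,
    Finset.prod_const, Finset.card_erase_of_mem (mem_univ _), card_univ, Fintype.card_fin]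
  exact Finset.sum_congr rfl fun g _ => by split_ifs <;> ring

lemma tvp_le_sum_of_mem_stdSimplex {C : (Fin m → Fin n) → ℝ} (hC : ∀ g, 0 ≤ C g)
    {x : Fin n → ℝ} (hx : x ∈ stdSimplex ℝ (Fin n)) (i : Fin n) : tvp C x i ≤ ∑ g, C g :=
  Finset.sum_le_sum fun g _ => by
    split_ifs
    · exact mul_le_of_le_one_right (hC g) (Finset.prod_le_one (fun k _ => hx.1 _)
        fun k _ => (mem_Icc_of_mem_stdSimplex hx _).2)
    · exact hC g

lemma continuous_tvp (i : Fin n) :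
    Continuous fun p : ((Fin m → Fin n) → ℝ) × (Fin n → ℝ) => tvp p.1 p.2 i :=
  continuous_finsetSum _ fun g _ => by split_ifs <;> fun_prop

lemma tvp_lt_tvp (hm : 2 ≤ m) {C : (Fin m → Fin n) → ℝ} (hC : ∀ g, 0 < C g)
    {u v : Fin n → ℝ} (hu : ∀ l, 0 ≤ u l) (huv : ∀ l, u l ≤ v l) {j : Fin n} (hj : u j < v j)
    (i : Fin n) : tvp C u i < tvp C v i := by
  refine Finset.sum_lt_sum (fun g _ => ?_) ⟨majIndex i j, mem_univ _, ?_⟩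
  · split_ifs
    exacts [mul_le_mul_of_nonneg_left (Finset.prod_le_prod (fun k _ => hu _) fun k _ => huv _)
      (hC g).le, le_rfl]
  · simp only [majIndex_zero, if_true, prod_erase_zero_majIndex]
    exact mul_lt_mul_of_pos_left (pow_lt_pow_left₀ hj (hu j) (by omega)) (hC _)

lemma majMat_mulVec_pow_le_tvp (hm : 2 ≤ m) {B : (Fin m → Fin n) → ℝ} (hB : ∀ g, 0 ≤ B g)
    {x : Fin n → ℝ} (hx : ∀ l, 0 ≤ x l) (i : Fin n) :
    (majMat B *ᵥ fun j => x j ^ (m - 1)) i ≤ tvp B x i := by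
  set t : (Fin m → Fin n) → ℝ := fun g =>
    if g 0 = i then B g * ∏ k ∈ univ.erase 0, x (g k) else 0
  have ht : ∀ g, 0 ≤ t g := fun g => by
    dsimp only [t]
    split_ifs
    exacts [mul_nonneg (hB g) (Finset.prod_nonneg fun k _ => hx _), le_rfl]
  calc (majMat B *ᵥ fun j => x j ^ (m - 1)) i = ∑ j, t (majIndex i j) := by
        simp only [mulVec, dotProduct, t, majIndex_zero, if_true, prod_erase_zero_majIndex]
        rfl
    _ = ∑ g ∈ univ.image (majIndex i), t g :=
        (Finset.sum_image fun j _ j' _ h => majIndex_injective hm i h).symm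
    _ ≤ tvp B x i := Finset.sum_le_sum_of_subset_of_nonneg (subset_univ _) fun g _ _ => ht g

lemma majMat_idT (hm : 2 ≤ m) : majMat (idT m n) = 1 := by
  ext i j
  by_cases hij : i = j
  · subst hij
    simp [majMat, idT]
  · rw [majMat, of_apply, idT, if_neg, one_apply_ne hij]
    intro h
    exact hij (by simpa [Fin.ext_iff] using (h ⟨1, hm⟩).symm)

end Tensor

section SpectralRadius

variable {n : ℕ}

lemma matRho_le_of_mulVec_le {N : Matrix (Fin n) (Fin n) ℝ} (hN : ∀ i j, 0 ≤ N i j)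
    {w : Fin n → ℝ} (hw : ∀ i, 0 < w i) {r : ℝ} (hr : 0 ≤ r)
    (hNw : ∀ i, (N *ᵥ w) i ≤ r * w i) : matRho N ≤ r := by
  refine Real.sSup_le ?_ hr
  rintro _ ⟨μ, ⟨v, hv, hNv⟩, rfl⟩
  obtain ⟨l, hl⟩ := Function.ne_iff.mp hv
  obtain ⟨i, -, hi⟩ := Finset.exists_max_image univ (fun l => ‖v l‖ / w l) ⟨l, mem_univ l⟩
  set c := ‖v i‖ / w i
  have hc : 0 < c := (div_pos (norm_pos_iff.mpr hl) (hw l)).trans_le (hi l (mem_univ l))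
  have hvc : ∀ l, ‖v l‖ ≤ c * w l := fun l => (div_le_iff₀ (hw l)).mp (hi l (mem_univ l))
  have hvi : ‖v i‖ = c * w i := (div_mul_cancel₀ _ (hw i).ne').symm
  have : ‖μ‖ * (c * w i) ≤ r * (c * w i) :=
    calc ‖μ‖ * (c * w i) = ‖∑ j, (N i j : ℂ) * v j‖ := by
          rw [← hvi, ← norm_mul, ← smul_eq_mul, ← Pi.smul_apply, ← hNv]
          simp [mulVec, dotProduct]
      _ ≤ ∑ j, N i j * (c * w j) := (norm_sum_le _ _).trans <| Finset.sum_le_sum fun j _ => by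
          rw [norm_mul, Complex.norm_real, Real.norm_of_nonneg (hN i j)]
          exact mul_le_mul_of_nonneg_left (hvc j) (hN i j)
      _ = c * (N *ᵥ w) i := by
          simp only [mulVec, dotProduct, Finset.mul_sum]
          exact Finset.sum_congr rfl fun j _ => by ring
      _ ≤ c * (r * w i) := mul_le_mul_of_nonneg_left (hNw i) hc.le
      _ = r * (c * w i) := by ring
  exact le_of_mul_le_mul_right this (mul_pos hc (hw i))

lemma matRho_lt_of_mulVec_lt {N : Matrix (Fin n) (Fin n) ℝ} (hN : ∀ i j, 0 ≤ N i j)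
    {w : Fin n → ℝ} (hw : ∀ i, 0 < w i) {s : ℝ} (hs : 0 < s)
    (hNw : ∀ i, (N *ᵥ w) i < s * w i) : matRho N < s := by
  set ratios : Finset ℝ := insert 0 (univ.image fun i => (N *ᵥ w) i / w i)
  have hr : ratios.max' (insert_nonempty _ _) < s := (Finset.max'_lt_iff _ _).mpr <| by
    simpa [ratios, hs, div_lt_iff₀ (hw _)] using hNw
  refine (matRho_le_of_mulVec_le hN hw (le_max' ratios 0 (mem_insert_self _ _))
    fun i => ?_).trans_lt hr
  rw [← div_le_iff₀ (hw i)]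
  exact le_max' ratios _ (mem_insert_of_mem (mem_image_of_mem _ (mem_univ i)))

end SpectralRadius

section TensorSpectralRadius

variable {m n : ℕ} [NeZero m]

lemma norm_le_sum_abs_of_tEig {B : (Fin m → Fin n) → ℝ} {μ : ℂ} (h : tEig B μ) :
    ‖μ‖ ≤ ∑ g, |B g| := by
  obtain ⟨x, hx, hBx⟩ := h
  obtain ⟨l, hl⟩ := Function.ne_iff.mp hx
  obtain ⟨i, -, hi⟩ := Finset.exists_max_image univ (fun l => ‖x l‖) ⟨l, mem_univ l⟩
  have hxi : 0 < ‖x i‖ ^ (m - 1) :=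
    pow_pos ((norm_pos_iff.mpr hl).trans_le (hi l (mem_univ l))) _
  refine le_of_mul_le_mul_right ?_ hxi
  calc ‖μ‖ * ‖x i‖ ^ (m - 1) = ‖tvpC B x i‖ := by rw [hBx i, norm_mul, norm_pow]
    _ ≤ ∑ g, |B g| * ‖x i‖ ^ (m - 1) :=
        (norm_sum_le _ _).trans <| Finset.sum_le_sum fun g _ => by
          split_ifs
          · rw [norm_mul, Complex.norm_real, Real.norm_eq_abs, norm_prod]
            refine mul_le_mul_of_nonneg_left ?_ (abs_nonneg _)
            calc _ ≤ ∏ _k ∈ univ.erase (0 : Fin m), ‖x i‖ :=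
                  Finset.prod_le_prod (fun _ _ => norm_nonneg _) fun k _ => hi _ (mem_univ _)
              _ = ‖x i‖ ^ (m - 1) := by
                  rw [prod_const, card_erase_of_mem (mem_univ _), card_univ, Fintype.card_fin]
          · rw [norm_zero]
            positivity
    _ = (∑ g, |B g|) * ‖x i‖ ^ (m - 1) := (Finset.sum_mul ..).symm

lemma norm_le_tRho_of_tEig {B : (Fin m → Fin n) → ℝ} {μ : ℂ} (h : tEig B μ) : ‖μ‖ ≤ tRho B :=
  le_csSup ⟨_, by rintro _ ⟨μ, hμ, rfl⟩; exact norm_le_sum_abs_of_tEig hμ⟩ ⟨μ, h, rfl⟩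

lemma tRho_nonneg (B : (Fin m → Fin n) → ℝ) : 0 ≤ tRho B :=
  Real.sSup_nonneg <| by
    rintro _ ⟨μ, -, rfl⟩
    exact norm_nonneg μ

lemma tvpC_ofReal (B : (Fin m → Fin n) → ℝ) (x : Fin n → ℝ) (i : Fin n) :
    tvpC B (fun l => (x l : ℂ)) i = tvp B x i := by
  simp only [tvpC, tvp, Complex.ofReal_sum]
  exact Finset.sum_congr rfl fun g _ => by split_ifs <;> simp

lemma le_tRho_of_eigenvector {B : (Fin m → Fin n) → ℝ} {x : Fin n → ℝ} (hx : x ≠ 0) {μ : ℝ}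
    (hμ : 0 ≤ μ) (hBx : ∀ i, tvp B x i = μ * x i ^ (m - 1)) : μ ≤ tRho B := by
  have hx' : (fun l => (x l : ℂ)) ≠ 0 := fun h => hx <| funext fun l => by
    simpa using congrFun h l
  have hμB : tEig B μ := ⟨_, hx', fun i => by rw [tvpC_ofReal, hBx i]; push_cast; rfl⟩
  have := norm_le_tRho_of_tEig hμB
  rwa [Complex.norm_real, Real.norm_of_nonneg hμ] at this

end TensorSpectralRadius

section PositiveTensor

variable {m n : ℕ} [NeZero m] [NeZero n]

lemma exists_pos_le_tvp (hm : 2 ≤ m) {C : (Fin m → Fin n) → ℝ} (hC : ∀ g, 0 < C g) :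
    ∃ c > 0, ∀ x ∈ stdSimplex ℝ (Fin n), ∀ i, c ≤ tvp C x i := by
  obtain ⟨g₀, hg₀⟩ := Finite.exists_min C
  have hn : (0 : ℝ) < (n : ℝ)⁻¹ := by simp [Nat.pos_of_neZero n]
  refine ⟨C g₀ * (n : ℝ)⁻¹ ^ (m - 1), mul_pos (hC g₀) (pow_pos hn _), fun x hx i => ?_⟩
  obtain ⟨j, -, hj⟩ := Finset.exists_le_of_sum_le univ_nonempty
    (f := fun _ => (n : ℝ)⁻¹) (g := x) (by simp [hx.2])
  calc C g₀ * (n : ℝ)⁻¹ ^ (m - 1) ≤ majMat C i j * x j ^ (m - 1) :=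
        mul_le_mul (hg₀ _) (pow_le_pow_left₀ hn.le hj _) (pow_pos hn _).le (hC _).le
    _ ≤ (majMat C *ᵥ fun j => x j ^ (m - 1)) i :=
        Finset.single_le_sum (f := fun j => majMat C i j * x j ^ (m - 1))
          (fun l _ => mul_nonneg (hC _).le (pow_nonneg (hx.1 l) _)) (mem_univ j)
    _ ≤ tvp C x i := majMat_mulVec_pow_le_tvp hm (fun g => (hC g).le) hx.1 i

lemma exists_pos_le_rpow_tvp_div_sum (hm : 2 ≤ m) {C : (Fin m → Fin n) → ℝ}
    (hC : ∀ g, 0 < C g) {p : ℝ} (hp : 0 ≤ p) : ∃ δ > 0, ∀ x ∈ stdSimplex ℝ (Fin n), ∀ i,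
      δ ≤ tvp C x i ^ p / ∑ l, tvp C x l ^ p := by
  obtain ⟨c, hc, hcC⟩ := exists_pos_le_tvp hm hC
  set c' := ∑ g, C g
  have hcc' : c ≤ c' := (hcC _ (single_mem_stdSimplex ℝ 0) 0).trans
    (tvp_le_sum_of_mem_stdSimplex (fun g => (hC g).le) (single_mem_stdSimplex ℝ 0) 0)
  have hn : (0 : ℝ) < n := by simp [Nat.pos_of_neZero n]
  have hcp : 0 < c ^ p := Real.rpow_pos_of_pos hc p
  refine ⟨c ^ p / (n * c' ^ p),
    div_pos hcp (mul_pos hn (Real.rpow_pos_of_pos (hc.trans_le hcc') p)), fun x hx i => ?_⟩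
  have hlow : ∀ l, c ^ p ≤ tvp C x l ^ p := fun l => Real.rpow_le_rpow hc.le (hcC x hx l) hp
  refine div_le_div₀ (hcp.le.trans (hlow i)) (hlow i)
    (Finset.sum_pos (fun l _ => hcp.trans_le (hlow l)) univ_nonempty) ?_
  calc ∑ l, tvp C x l ^ p ≤ ∑ _l : Fin n, c' ^ p := Finset.sum_le_sum fun l _ =>
        Real.rpow_le_rpow (hc.le.trans (hcC x hx l))
          (tvp_le_sum_of_mem_stdSimplex (fun g => (hC g).le) hx l) hp
    _ = n * c' ^ p := by simp

noncomputable def tvpRatioMax (C : (Fin m → Fin n) → ℝ) (x : Fin n → ℝ) : ℝ :=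
  univ.sup' univ_nonempty fun i => tvp C x i / x i ^ (m - 1)

variable {C : (Fin m → Fin n) → ℝ}

lemma tvp_le_tvpRatioMax_mul {x : Fin n → ℝ} (hx : ∀ l, 0 < x l) (i : Fin n) :
    tvp C x i ≤ tvpRatioMax C x * x i ^ (m - 1) :=
  (div_le_iff₀ (pow_pos (hx i) _)).mp
    (le_sup' (fun i => tvp C x i / x i ^ (m - 1)) (mem_univ i))

lemma tvpRatioMax_lt_iff {x : Fin n → ℝ} (hx : ∀ l, 0 < x l) {r : ℝ} :
    tvpRatioMax C x < r ↔ ∀ i, tvp C x i < r * x i ^ (m - 1) := by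
  simp [tvpRatioMax, Finset.sup'_lt_iff, div_lt_iff₀ (pow_pos (hx _) _)]

lemma tvpRatioMax_smul {a : ℝ} (ha : 0 < a) (x : Fin n → ℝ) :
    tvpRatioMax C (a • x) = tvpRatioMax C x := by
  simp only [tvpRatioMax, tvp_smul, Pi.smul_apply, smul_eq_mul, mul_pow,
    mul_div_mul_left _ _ (pow_pos ha (m - 1)).ne']

lemma continuousOn_tvpRatioMax : ContinuousOn (tvpRatioMax C) {x | ∀ i, 0 < x i} :=
  ContinuousOn.finset_sup'_apply _ fun i _ =>
    ((continuous_tvp i).comp (continuous_const.prodMk continuous_id)).continuousOn.div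
      (by fun_prop) fun x hx => (pow_pos (hx i) _).ne'

lemma tvpRatioMax_lt_of_pow_eq (hm : 2 ≤ m) (hC : ∀ g, 0 < C g) {x y : Fin n → ℝ}
    (hx : ∀ l, 0 < x l) (hy : ∀ l, 0 < y l) (hxy : ∀ l, y l ^ (m - 1) = tvp C x l) {j : Fin n}
    (hj : tvp C x j < tvpRatioMax C x * x j ^ (m - 1)) : tvpRatioMax C y < tvpRatioMax C x := by
  set ρ := tvpRatioMax C x
  have hρ : 0 ≤ ρ := nonneg_of_mul_nonneg_left ((tvp_nonneg (fun g => (hC g).le)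
    (fun l => (hx l).le) j).trans (tvp_le_tvpRatioMax_mul hx j)) (pow_pos (hx j) _)
  have hm1 : m - 1 ≠ 0 := by omega
  -- `c` is the `(m-1)`-th root of `ρ`, so that `y ≤ c • x` with strict inequality at `j`
  set c := ρ ^ ((m - 1 : ℕ) : ℝ)⁻¹
  have hc : c ^ (m - 1) = ρ := Real.rpow_inv_natCast_pow hρ hm1
  have hcx : ∀ l, (c * x l) ^ (m - 1) = ρ * x l ^ (m - 1) := fun l => by rw [mul_pow, hc]
  have hc0 : 0 ≤ c := Real.rpow_nonneg hρ _
  have hle : ∀ l, y l ≤ c * x l := fun l => by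
    rw [← pow_le_pow_iff_left₀ (hy l).le (by positivity [hx l]) hm1, hxy, hcx]
    exact tvp_le_tvpRatioMax_mul hx l
  have hlt : y j < c * x j := by
    rwa [← pow_lt_pow_iff_left₀ (hy j).le (by positivity [hx j]) hm1, hxy, hcx]
  refine (tvpRatioMax_lt_iff hy).mpr fun i => ?_
  calc tvp C y i < tvp C (c • x) i := tvp_lt_tvp hm hC (fun l => (hy l).le) hle hlt i
    _ = ρ * y i ^ (m - 1) := by rw [tvp_smul, hc, hxy]

end PositiveTensor

section Eigenvector

variable {m n : ℕ} [NeZero m] [NeZero n]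

theorem exists_pos_eigenvector_of_pos (hm : 2 ≤ m) {C : (Fin m → Fin n) → ℝ}
    (hC : ∀ g, 0 < C g) : ∃ x ∈ stdSimplex ℝ (Fin n), (∀ i, 0 < x i) ∧
      ∃ μ, ∀ i, tvp C x i = μ * x i ^ (m - 1) := by
  set p : ℝ := ((m - 1 : ℕ) : ℝ)⁻¹
  obtain ⟨δ, hδ, hroot⟩ := exists_pos_le_rpow_tvp_div_sum hm hC (p := p) (by positivity)
  obtain ⟨c, hc, hcC⟩ := exists_pos_le_tvp hm hC
  have hpos : ∀ x ∈ stdSimplex ℝ (Fin n), ∀ l, 0 < tvp C x l ^ p := fun x hx l =>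
    Real.rpow_pos_of_pos (hc.trans_le (hcC x hx l)) p
  set K := stdSimplex ℝ (Fin n) ∩ Set.Ici fun _ => δ
  set S : (Fin n → ℝ) → Fin n → ℝ := fun x => (∑ l, tvp C x l ^ p)⁻¹ • fun i => tvp C x i ^ p
  have hSK : ∀ x ∈ stdSimplex ℝ (Fin n), S x ∈ K := fun x hx => by
    have hsum := Finset.sum_pos (fun l _ => hpos x hx l) univ_nonempty
    refine ⟨⟨fun i => mul_nonneg (inv_nonneg.mpr hsum.le) (hpos x hx i).le, ?_⟩, fun i => ?_⟩
    · simp only [S, Pi.smul_apply, smul_eq_mul, ← Finset.mul_sum]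
      exact inv_mul_cancel₀ hsum.ne'
    · simpa only [S, Pi.smul_apply, smul_eq_mul, inv_mul_eq_div] using hroot x hx i
  have hKpos : K ⊆ {x | ∀ i, 0 < x i} := fun x hx i => hδ.trans_le (hx.2 i)
  have hK : IsCompact K := (isCompact_stdSimplex ℝ (Fin n)).inter_right isClosed_Ici
  obtain ⟨x, hxK, hmin⟩ := hK.exists_isMinOn ⟨_, hSK _ (single_mem_stdSimplex ℝ 0)⟩
    ((continuousOn_tvpRatioMax (m := m) (C := C)).mono hKpos)
  have hx := hKpos hxK
  refine ⟨x, hxK.1, hx, tvpRatioMax C x, fun i => (tvp_le_tvpRatioMax_mul hx i).antisymm ?_⟩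
  by_contra! hi
  -- `S x` would be a strictly better point than the minimiser `x`
  have hy := hpos x hxK.1
  have hlt := tvpRatioMax_lt_of_pow_eq hm hC hx hy
    (fun l => Real.rpow_inv_natCast_pow (tvp_nonneg (fun g => (hC g).le) (fun l => (hx l).le) l)
      (by omega)) hi
  rw [← tvpRatioMax_smul (inv_pos.mpr (Finset.sum_pos (fun l _ => hy l) univ_nonempty))] at hlt
  exact hlt.not_ge (hmin (hSK x hxK.1))

theorem exists_eigenvector_ge_of_forall_exists_le (hm : 2 ≤ m) {B : (Fin m → Fin n) → ℝ}
    (hB : ∀ g, 0 ≤ B g) {s : ℝ}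
    (H : ∀ x : Fin n → ℝ, (∀ i, 0 < x i) → ∃ i, s * x i ^ (m - 1) ≤ tvp B x i) :
    ∃ x ∈ stdSimplex ℝ (Fin n), ∃ μ ≥ s, ∀ i, tvp B x i = μ * x i ^ (m - 1) := by
  set C : ℕ → (Fin m → Fin n) → ℝ := fun k g => B g + 1 / (k + 1)
  have hBC : ∀ k g, B g ≤ C k g := fun k g => le_add_of_nonneg_right (by positivity)
  choose X hXΔ hXpos L hL using fun k =>
    exists_pos_eigenvector_of_pos hm (C := C k) fun g =>
      (hB g).trans_lt (lt_add_of_pos_right _ (by positivity))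
  have hsL : ∀ k, s ≤ L k := fun k => by
    obtain ⟨i, hi⟩ := H _ (hXpos k)
    refine le_of_mul_le_mul_right ?_ (pow_pos (hXpos k i) (m - 1))
    exact hi.trans ((tvp_mono (hBC k) (fun l => (hXpos k l).le) i).trans_eq (hL k i))
  obtain ⟨x, hxΔ, φ, hφ, hX⟩ := (isCompact_stdSimplex ℝ (Fin n)).tendsto_subseq hXΔ
  have hCB : Tendsto (C ∘ φ) atTop (𝓝 B) := tendsto_pi_nhds.mpr fun g => by
    simpa [C] using tendsto_const_nhds.add
      ((tendsto_one_div_add_atTop_nhds_zero_nat (𝕜 := ℝ)).comp hφ.tendsto_atTop)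
  have htvp : ∀ i, Tendsto (fun k => tvp (C (φ k)) (X (φ k)) i) atTop (𝓝 (tvp B x i)) :=
    fun i => ((continuous_tvp i).tendsto _).comp (hCB.prodMk_nhds hX)
  have hXpow : ∀ i, Tendsto (fun k => X (φ k) i ^ (m - 1)) atTop (𝓝 (x i ^ (m - 1))) :=
    fun i => (((continuous_apply i).tendsto x).comp hX).pow _
  obtain ⟨j, -, hj⟩ :=
    Finset.exists_lt_of_sum_lt (s := univ) (f := 0) (g := x) (by simp [hxΔ.2])
  have hLμ : Tendsto (L ∘ φ) atTop (𝓝 (tvp B x j / x j ^ (m - 1))) :=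
    ((htvp j).div (hXpow j) (pow_pos hj _).ne').congr fun k => by
      simp [hL, mul_div_cancel_right₀ _ (pow_pos (hXpos _ j) (m - 1)).ne']
  refine ⟨x, hxΔ, _, ge_of_tendsto' hLμ fun k => hsL _, fun i =>
    tendsto_nhds_unique (htvp i) ?_⟩
  simpa [hL] using hLμ.mul (hXpow i)

end Eigenvector

theorem exists_pos_tvp_lt_of_tRho_lt {m n : ℕ} [NeZero m] (hm : 2 ≤ m)
    {B : (Fin m → Fin n) → ℝ} (hB : ∀ g, 0 ≤ B g) {s : ℝ} (hs : tRho B < s) :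
    ∃ x : Fin n → ℝ, (∀ i, 0 < x i) ∧ ∀ i, tvp B x i < s * x i ^ (m - 1) := by
  rcases n.eq_zero_or_pos with rfl | hn
  · exact ⟨0, fun i => i.elim0, fun i => i.elim0⟩
  have : NeZero n := ⟨hn.ne'⟩
  by_contra! H
  obtain ⟨x, hx, μ, hsμ, hBx⟩ := exists_eigenvector_ge_of_forall_exists_le hm hB H
  have hx0 : x ≠ 0 := by
    rintro rfl
    simpa using hx.2
  have := le_tRho_of_eigenvector hx0 (by linarith [tRho_nonneg B]) hBx
  linarith

theorem stmt1 {m n : ℕ} [NeZero m] (hm : 2 ≤ m)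
    (A : (Fin m → Fin n) → ℝ) (hA : isNonsingMTensor A) :
    isNonsingMMatrix (majMat A) := by
  obtain ⟨s, B, hB, hBs, rfl⟩ := hA
  obtain ⟨x, hx, hBx⟩ := exists_pos_tvp_lt_of_tRho_lt hm hB hBs
  have hNw : ∀ i, (majMat B *ᵥ fun j => x j ^ (m - 1)) i < s * x i ^ (m - 1) := fun i =>
    (majMat_mulVec_pow_le_tvp hm hB (fun l => (hx l).le) i).trans_lt (hBx i)
  refine ⟨s, majMat B, fun i j => hB _, matRho_lt_of_mulVec_lt (fun i j => hB _)
    (fun i => pow_pos (hx i) _) ((tRho_nonneg B).trans_lt hBs) hNw, ?_⟩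
  rw [← majMat_idT hm]
  rfl
end

section
/- A tensor A of order m and dimension n has a unique 2nd-order left inverse (a matrix P with P A = I in the sense of matrix-tensor product equal to the identity tensor) if and only if A is row diagonal and its majorization matrix M(A) is nonsingular; in that case the left inverse is M(A)^{-1}. -/
open Finset Matrix

/-! A left inverse `P` of `A` is seen through two kinds of entries of `P A = I`. On the index
`(i, j, …, j)` it reads `(P M(A))_{ij} = δ_{ij}`, so `P` is a left inverse of `M(A)`. On an index whose
trailing entries are not all equal it says that `P` kills the fibre `j ↦ a_{j i2…im}`, which then
vanishes because `P` is invertible: `A` is row diagonal. Conversely, for row diagonal `A` these are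
the only entries, so `P A = I` is equivalent to `P M(A) = 1`, whose only solution is `M(A)⁻¹`. -/

section LeftInverse

variable {m n : ℕ} [NeZero m]

def headTail (i j : Fin n) : Fin m → Fin n := fun k => if k = 0 then i else j

theorem majMat_apply (A : (Fin m → Fin n) → ℝ) (i j : Fin n) :
    majMat A i j = A (headTail i j) := rfl

theorem update_headTail (i j l : Fin n) :
    Function.update (headTail i j : Fin m → Fin n) 0 l = headTail l j := by
  funext k
  rcases eq_or_ne k 0 with rfl | hk
  · simp [headTail]
  · simp [headTail, hk]

theorem eq_headTail_of_tail_eq {g : Fin m → Fin n} {t : Fin n} (h : ∀ k, k ≠ 0 → g k = t) :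
    g = headTail (g 0) t := by
  funext k
  rcases eq_or_ne k 0 with rfl | hk
  · simp [headTail]
  · simp [headTail, hk, h k hk]

theorem matTen_headTail (P : Matrix (Fin n) (Fin n) ℝ) (A : (Fin m → Fin n) → ℝ) (i j : Fin n) :
    matTen P A (headTail i j) = (P * majMat A) i j := by
  simp only [matTen, update_headTail, mul_apply, majMat_apply]
  rfl

theorem idT_eq_zero_of_ne {g : Fin m → Fin n} {k l : Fin m} (hkl : g k ≠ g l) : idT m n g = 0 :=
  if_neg fun h => hkl ((h k).trans (h l).symm)

theorem idT_headTail (hm : 2 ≤ m) (i j : Fin n) :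
    idT m n (headTail i j) = (1 : Matrix (Fin n) (Fin n) ℝ) i j := by
  have h10 : (⟨1, hm⟩ : Fin m) ≠ 0 := by simp [Fin.ext_iff]
  by_cases hij : i = j
  · subst hij
    rw [one_apply_eq, idT, if_pos]
    intro k
    by_cases hk : k = 0 <;> simp [headTail, hk]
  · rw [one_apply_ne hij, idT_eq_zero_of_ne (k := 0) (l := ⟨1, hm⟩)]
    simpa [headTail, h10] using hij

theorem mul_majMat_eq_one_of_matTen_eq_idT (hm : 2 ≤ m) {P : Matrix (Fin n) (Fin n) ℝ}
    {A : (Fin m → Fin n) → ℝ} (hP : matTen P A = idT m n) : P * majMat A = 1 := by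
  ext i j
  rw [← matTen_headTail, hP, idT_headTail hm]

theorem matTen_update_zero (P : Matrix (Fin n) (Fin n) ℝ) (A : (Fin m → Fin n) → ℝ)
    (g : Fin m → Fin n) (i : Fin n) :
    matTen P A (Function.update g 0 i) = (P *ᵥ fun j => A (Function.update g 0 j)) i := by
  simp [matTen, mulVec, dotProduct]

theorem rowDiag_of_matTen_eq_idT (hm : 2 ≤ m) {P : Matrix (Fin n) (Fin n) ℝ}
    {A : (Fin m → Fin n) → ℝ} (hP : matTen P A = idT m n) : rowDiag A := by
  rintro g ⟨k, l, hk, hl, hkl⟩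
  set v : Fin n → ℝ := fun j => A (Function.update g 0 j)
  have hPv : P *ᵥ v = 0 := by
    funext i
    rw [← matTen_update_zero, hP, Pi.zero_apply, idT_eq_zero_of_ne (k := k) (l := l)]
    rwa [Function.update_of_ne hk, Function.update_of_ne hl]
  have hMP : majMat A * P = 1 := mul_eq_one_comm.mp (mul_majMat_eq_one_of_matTen_eq_idT hm hP)
  have hv : v = 0 := by
    rw [← one_mulVec v, ← hMP, ← mulVec_mulVec, hPv, mulVec_zero]
  simpa [v] using congrFun hv (g 0)

theorem matTen_eq_zero_of_rowDiag {A : (Fin m → Fin n) → ℝ} (hA : rowDiag A)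
    (P : Matrix (Fin n) (Fin n) ℝ) {g : Fin m → Fin n} {k l : Fin m} (hk : k ≠ 0) (hl : l ≠ 0)
    (hkl : g k ≠ g l) : matTen P A g = 0 := by
  refine Finset.sum_eq_zero fun j _ => ?_
  rw [hA _ ⟨k, l, hk, hl, by rwa [Function.update_of_ne hk, Function.update_of_ne hl]⟩, mul_zero]

theorem matTen_eq_idT_iff_of_rowDiag (hm : 2 ≤ m) {A : (Fin m → Fin n) → ℝ} (hA : rowDiag A)
    (P : Matrix (Fin n) (Fin n) ℝ) : matTen P A = idT m n ↔ P * majMat A = 1 := by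
  refine ⟨mul_majMat_eq_one_of_matTen_eq_idT hm, fun hPM => funext fun g => ?_⟩
  have h10 : (⟨1, hm⟩ : Fin m) ≠ 0 := by simp [Fin.ext_iff]
  by_cases htail : ∀ k, k ≠ 0 → g k = g ⟨1, hm⟩
  · rw [eq_headTail_of_tail_eq htail, matTen_headTail, idT_headTail hm, hPM]
  · obtain ⟨k, hk, hkl⟩ := not_forall₂.mp htail
    rw [matTen_eq_zero_of_rowDiag hA P hk h10 hkl, idT_eq_zero_of_ne hkl]

end LeftInverse

theorem stmt3 {m n : ℕ} [NeZero m] (hm : 2 ≤ m) (A : (Fin m → Fin n) → ℝ) :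
    ((∃! P : Matrix (Fin n) (Fin n) ℝ, matTen P A = idT m n) ↔
      (rowDiag A ∧ IsUnit (majMat A))) ∧
    (rowDiag A → IsUnit (majMat A) → matTen (majMat A)⁻¹ A = idT m n) := by
  have inv_isLeftInverse (hA : rowDiag A) (hM : IsUnit (majMat A)) :
      matTen (majMat A)⁻¹ A = idT m n :=
    (matTen_eq_idT_iff_of_rowDiag hm hA _).mpr (nonsing_inv_mul _ ((isUnit_iff_isUnit_det _).mp hM))
  refine ⟨⟨fun ⟨P, hP, _⟩ => ?_, fun ⟨hA, hM⟩ => ?_⟩, inv_isLeftInverse⟩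
  · exact ⟨rowDiag_of_matTen_eq_idT hm hP,
      IsUnit.of_mul_eq_one_right P (mul_majMat_eq_one_of_matTen_eq_idT hm hP)⟩
  · refine ⟨(majMat A)⁻¹, inv_isLeftInverse hA hM, fun Q hQ => ?_⟩
    exact (inv_eq_left_inv (mul_majMat_eq_one_of_matTen_eq_idT hm hQ)).symm
end

section
/- Let A be a nonsingular M-tensor. Then the splitting A = M(A) I - F, where F := M(A) I - A, is a regular splitting: F ≥ 0 entrywise, M(A) I is row diagonal and left-nonsingular, and M(A)^{-1} ≥ 0 entrywise. -/
open Finset Matrix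

/-!
Write `A = s I - B`. Then `M(A) = s I - M(B)` with `M(B) ≥ 0`, and the two statements about
`F = M(A) I - A` are entrywise bookkeeping: `F` vanishes at the indices `(i, j, …, j)` and
equals `B` at all others. The content is that `s I - M(B)` has a nonnegative inverse.

For the positive tensors `B + ε`, minimising `lam` over the compact set of pairs `(lam, x)` with
`x` in the simplex and `(B + ε) x^{m-1} ≤ lam x^{[m-1]}` yields a positive eigenvector `x_ε` with
eigenvalue `lam_ε` (at a strict coordinate, shrinking that coordinate would lower `lam`). Since the
diagonal part of a nonnegative tensor is dominated by the whole,
`M(B) x_ε^{[m-1]} ≤ (B + ε) x_ε^{m-1} = lam_ε x_ε^{[m-1]}`. If all `lam_ε` were `≥ s`, by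
compactness they would accumulate at an eigenvalue of `B` of size `≥ s > ρ(B)`. So some
`y = x_ε^{[m-1]} > 0` satisfies `M(B) y ≤ r y` with `r < s`; then the powers of `M(B) / s` decay
geometrically on `y`, and the Neumann series `∑ (M(B) / s)^k` is a nonnegative inverse of
`I - M(B) / s`.
-/

open Filter Topology

section stdSimplex

variable {ι : Type*} [Fintype ι] {x : ι → ℝ}

lemma exists_pos_of_mem_stdSimplex (hx : x ∈ stdSimplex ℝ ι) : ∃ j, 0 < x j := by
  by_contra! h
  have := hx.2
  rw [sum_eq_zero fun j _ => le_antisymm (h j) (hx.1 j)] at this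
  exact zero_ne_one this

lemma ne_zero_of_mem_stdSimplex (hx : x ∈ stdSimplex ℝ ι) : x ≠ 0 := by
  rintro rfl
  obtain ⟨j, hj⟩ := exists_pos_of_mem_stdSimplex hx
  exact hj.false

end stdSimplex

lemma one_sub_mul_tsum_pow {R : Type*} [Ring R] [TopologicalSpace R] [IsTopologicalRing R]
    [T2Space R] {x : R} (h : Summable fun k : ℕ => x ^ k) : (1 - x) * ∑' k, x ^ k = 1 := by
  have hlim : Tendsto (fun N => (1 - x) * ∑ k ∈ range N, x ^ k) atTop (𝓝 ((1 - x) * ∑' k, x ^ k)) :=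
    h.hasSum.tendsto_sum_nat.const_mul _
  simp_rw [mul_neg_geom_sum] at hlim
  simpa using tendsto_nhds_unique hlim (tendsto_const_nhds.sub h.tendsto_atTop_zero)

namespace Matrix

variable {ι : Type*} [Fintype ι] {M : Matrix ι ι ℝ} {x y : ι → ℝ}

lemma mulVec_mono_of_nonneg (hM : ∀ i j, 0 ≤ M i j) (hxy : x ≤ y) : M *ᵥ x ≤ M *ᵥ y :=
  fun i => sum_le_sum fun j _ => mul_le_mul_of_nonneg_left (hxy j) (hM i j)

lemma apply_mul_le_mulVec (hM : ∀ i j, 0 ≤ M i j) (hy : 0 ≤ y) (i j : ι) :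
    M i j * y j ≤ (M *ᵥ y) i :=
  single_le_sum (f := fun j => M i j * y j) (fun j _ => mul_nonneg (hM i j) (hy j)) (mem_univ j)

lemma pow_mulVec_le [DecidableEq ι] (hM : ∀ i j, 0 ≤ M i j) {q : ℝ} (hq : 0 ≤ q)
    (h : M *ᵥ y ≤ q • y) (k : ℕ) : M ^ k *ᵥ y ≤ q ^ k • y := by
  induction k with
  | zero => simp
  | succ k ih =>
    calc M ^ (k + 1) *ᵥ y = M *ᵥ (M ^ k *ᵥ y) := by rw [pow_succ', mulVec_mulVec]
      _ ≤ M *ᵥ (q ^ k • y) := mulVec_mono_of_nonneg hM ih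
      _ = q ^ k • (M *ᵥ y) := mulVec_smul _ _ _
      _ ≤ q ^ k • q • y := smul_le_smul_of_nonneg_left h (pow_nonneg hq k)
      _ = q ^ (k + 1) • y := by rw [smul_smul, pow_succ]

lemma summable_pow_of_mulVec_le [DecidableEq ι] (hM : ∀ i j, 0 ≤ M i j) (hy : ∀ i, 0 < y i)
    {q : ℝ} (hq0 : 0 ≤ q) (hq1 : q < 1) (h : M *ᵥ y ≤ q • y) : Summable fun k : ℕ => M ^ k := by
  refine Pi.summable.2 fun i => Pi.summable.2 fun j =>
    ((summable_geometric_of_lt_one hq0 hq1).mul_right (y i / y j)).of_nonneg_of_le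
      (fun k => pow_apply_nonneg hM k i j) fun k => ?_
  rw [← mul_div_assoc, le_div_iff₀ (hy j)]
  exact (apply_mul_le_mulVec (pow_apply_nonneg hM k) (fun i => (hy i).le) i j).trans
    (pow_mulVec_le hM hq0 h k i)

theorem exists_nonneg_mul_eq_one_of_mulVec_le [DecidableEq ι] (hM : ∀ i j, 0 ≤ M i j)
    (hy : ∀ i, 0 < y i) {r s : ℝ} (hr : 0 ≤ r) (hrs : r < s) (h : M *ᵥ y ≤ r • y) :
    ∃ G : Matrix ι ι ℝ, (s • 1 - M) * G = 1 ∧ ∀ i j, 0 ≤ G i j := by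
  have hs : 0 < s := hr.trans_lt hrs
  set P := s⁻¹ • M
  have hP (i j : ι) : 0 ≤ P i j := mul_nonneg (inv_nonneg.2 hs.le) (hM i j)
  have hPy : P *ᵥ y ≤ (r / s) • y := by
    rw [smul_mulVec, div_eq_inv_mul, mul_smul]
    exact smul_le_smul_of_nonneg_left h (inv_nonneg.2 hs.le)
  have hsum := summable_pow_of_mulVec_le hP hy (div_nonneg hr hs.le) ((div_lt_one hs).2 hrs) hPy
  refine ⟨s⁻¹ • ∑' k, P ^ k, ?_, fun i j => mul_nonneg (inv_nonneg.2 hs.le) ?_⟩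
  · rw [show s • 1 - M = s • (1 - P) by simp [P, smul_sub, smul_smul, mul_inv_cancel₀ hs.ne'],
      smul_mul_smul_comm, mul_inv_cancel₀ hs.ne', one_smul, one_sub_mul_tsum_pow hsum]
  · exact (Pi.hasSum.1 (Pi.hasSum.1 hsum.hasSum i) j).nonneg fun k => pow_apply_nonneg hP k i j

end Matrix

namespace MTensor

variable {m n : ℕ} [NeZero m]

lemma mk_one_ne_zero (hm : 2 ≤ m) : (⟨1, hm⟩ : Fin m) ≠ 0 := by
  simp [Fin.ext_iff]

def majIdx (i j : Fin n) : Fin m → Fin n := fun k => if k = 0 then i else j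

lemma majMat_apply (A : (Fin m → Fin n) → ℝ) (i j : Fin n) : majMat A i j = A (majIdx i j) := rfl

@[simp]
lemma majIdx_zero (i j : Fin n) : majIdx (m := m) i j 0 = i := if_pos rfl

lemma prod_majIdx (x : Fin n → ℝ) (i j : Fin n) :
    ∏ k ∈ univ.erase 0, x (majIdx (m := m) i j k) = x j ^ (m - 1) := by
  rw [prod_congr rfl fun k hk => by rw [majIdx, if_neg (ne_of_mem_erase hk)], prod_const,
    card_erase_of_mem (mem_univ _), card_univ, Fintype.card_fin]

lemma majIdx_injective (hm : 2 ≤ m) (i : Fin n) : Function.Injective (majIdx (m := m) i) := by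
  intro j j' h
  simpa [majIdx, Fin.ext_iff] using congrFun h ⟨1, hm⟩

def tvpTerm (C : (Fin m → Fin n) → ℝ) (x : Fin n → ℝ) (i : Fin n) (g : Fin m → Fin n) : ℝ :=
  if g 0 = i then C g * ∏ k ∈ univ.erase 0, x (g k) else 0

lemma tvp_eq_sum_tvpTerm (C : (Fin m → Fin n) → ℝ) (x : Fin n → ℝ) (i : Fin n) :
    tvp C x i = ∑ g, tvpTerm C x i g := rfl

lemma tvpTerm_majIdx (C : (Fin m → Fin n) → ℝ) (x : Fin n → ℝ) (i j : Fin n) :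
    tvpTerm C x i (majIdx i j) = C (majIdx i j) * x j ^ (m - 1) := by
  rw [tvpTerm, majIdx_zero, if_pos rfl, prod_majIdx]

section tvp

variable {C D : (Fin m → Fin n) → ℝ} {x y : Fin n → ℝ}

lemma tvpTerm_nonneg (hC : ∀ g, 0 ≤ C g) (hx : 0 ≤ x) (i : Fin n) (g : Fin m → Fin n) :
    0 ≤ tvpTerm C x i g := by
  unfold tvpTerm
  split_ifs
  exacts [mul_nonneg (hC g) (prod_nonneg fun k _ => hx _), le_rfl]

lemma tvpTerm_mono (hC : ∀ g, 0 ≤ C g) (hx : 0 ≤ x) (hxy : x ≤ y) (i : Fin n)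
    (g : Fin m → Fin n) : tvpTerm C x i g ≤ tvpTerm C y i g := by
  unfold tvpTerm
  split_ifs
  exacts [mul_le_mul_of_nonneg_left (prod_le_prod (fun k _ => hx _) fun k _ => hxy _) (hC g),
    le_rfl]

lemma tvp_mono_left (hCD : C ≤ D) (hx : 0 ≤ x) : tvp C x ≤ tvp D x := fun i =>
  sum_le_sum fun g _ => by
    split_ifs
    exacts [mul_le_mul_of_nonneg_right (hCD g) (prod_nonneg fun k _ => hx _), le_rfl]

lemma tvp_smul (C : (Fin m → Fin n) → ℝ) (t : ℝ) (x : Fin n → ℝ) :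
    tvp C (t • x) = t ^ (m - 1) • tvp C x := by
  ext i
  simp only [tvp, Pi.smul_apply, smul_eq_mul, prod_mul_distrib, prod_const,
    card_erase_of_mem (mem_univ _), card_univ, Fintype.card_fin, mul_sum]
  exact sum_congr rfl fun g _ => by split_ifs <;> ring

lemma continuous_tvp :
    Continuous fun p : ((Fin m → Fin n) → ℝ) × (Fin n → ℝ) => tvp p.1 p.2 := by
  refine continuous_pi fun i => continuous_finsetSum _ fun g _ => ?_
  split_ifs <;> fun_prop

lemma majMat_mulVec_pow_le_tvp (hm : 2 ≤ m) (hC : ∀ g, 0 ≤ C g) (hx : 0 ≤ x) :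
    majMat C *ᵥ x ^ (m - 1) ≤ tvp C x := fun i => by
  calc (majMat C *ᵥ x ^ (m - 1)) i = ∑ g ∈ univ.image (majIdx i), tvpTerm C x i g := by
        rw [sum_image fun j _ j' _ h => majIdx_injective hm i h]
        simp only [mulVec, dotProduct, Pi.pow_apply, majMat_apply, tvpTerm_majIdx]
    _ ≤ tvp C x i := sum_le_sum_of_subset_of_nonneg (subset_univ _)
        fun g _ _ => tvpTerm_nonneg hC hx i g

end tvp

section Perron

variable {C : (Fin m → Fin n) → ℝ} {x : Fin n → ℝ} {lam : ℝ}

lemma tvp_pos (hm : 2 ≤ m) (hC : ∀ g, 0 < C g) (hx : x ∈ stdSimplex ℝ (Fin n)) (i : Fin n) :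
    0 < tvp C x i := by
  obtain ⟨j, hj⟩ := exists_pos_of_mem_stdSimplex hx
  refine lt_of_lt_of_le ?_ (majMat_mulVec_pow_le_tvp hm (fun g => (hC g).le) hx.1 i)
  exact sum_pos' (fun j _ => mul_nonneg (hC _).le (pow_nonneg (hx.1 j) _))
    ⟨j, mem_univ _, mul_pos (hC _) (pow_pos hj _)⟩

lemma tvp_lt_tvp (hm : 2 ≤ m) (hC : ∀ g, 0 < C g) {y : Fin n → ℝ} (hx : 0 ≤ x) (hxy : x ≤ y)
    {j : Fin n} (hj : x j < y j) (i : Fin n) : tvp C x i < tvp C y i := by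
  rw [tvp_eq_sum_tvpTerm, tvp_eq_sum_tvpTerm]
  refine sum_lt_sum (fun g _ => tvpTerm_mono (fun g => (hC g).le) hx hxy i g)
    ⟨majIdx i j, mem_univ _, ?_⟩
  rw [tvpTerm_majIdx, tvpTerm_majIdx]
  exact mul_lt_mul_of_pos_left (pow_lt_pow_left₀ hj (hx j) (by omega)) (hC _)

lemma pos_of_tvp_le (hm : 2 ≤ m) (hC : ∀ g, 0 < C g) (hx : x ∈ stdSimplex ℝ (Fin n))
    (hle : tvp C x ≤ lam • x ^ (m - 1)) : 0 < lam ∧ ∀ i, 0 < x i := by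
  have hpos (i : Fin n) : 0 < lam * x i ^ (m - 1) := (tvp_pos hm hC hx i).trans_le (hle i)
  obtain ⟨j, -⟩ := exists_pos_of_mem_stdSimplex hx
  have hlam : 0 < lam := pos_of_mul_pos_left (hpos j) (pow_nonneg (hx.1 j) _)
  refine ⟨hlam, fun i => (hx.1 i).lt_of_ne fun h => ?_⟩
  simpa [← h, zero_pow (show m - 1 ≠ 0 by omega)] using hpos i

lemma exists_tvp_le_smul (C : (Fin m → Fin n) → ℝ) (hx : ∀ i, 0 < x i) :
    ∃ lam : ℝ, tvp C x ≤ lam • x ^ (m - 1) :=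
  (eventually_all.2 fun i =>
    (tendsto_id.atTop_mul_const (pow_pos (hx i) (m - 1))).eventually_ge_atTop (tvp C x i)).exists

lemma exists_lt_tvp_le_smul_of_forall_lt (h : ∀ i, tvp C x i < lam * x i ^ (m - 1)) :
    ∃ lam' < lam, tvp C x ≤ lam' • x ^ (m - 1) := by
  have hnear : ∀ᶠ μ in 𝓝[<] lam, μ < lam ∧ ∀ i, tvp C x i < μ * x i ^ (m - 1) :=
    eventually_mem_nhdsWithin.and <| eventually_all.2 fun i =>
      (((continuous_mul_const _).tendsto lam).mono_left nhdsWithin_le_nhds).eventually_const_lt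
        (h i)
  obtain ⟨μ, hμ, hμx⟩ := hnear.exists
  exact ⟨μ, hμ, fun i => (hμx i).le⟩

lemma exists_mem_stdSimplex_tvp_le [Nonempty (Fin n)] (hx : ∀ i, 0 < x i)
    (h : tvp C x ≤ lam • x ^ (m - 1)) :
    ∃ x' ∈ stdSimplex ℝ (Fin n), tvp C x' ≤ lam • x' ^ (m - 1) := by
  have hsum : 0 < ∑ i, x i := sum_pos (fun i _ => hx i) univ_nonempty
  refine ⟨(∑ i, x i)⁻¹ • x, ⟨fun i => mul_nonneg (inv_nonneg.2 hsum.le) (hx i).le, ?_⟩, ?_⟩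
  · simp [← mul_sum, hsum.ne']
  · rw [tvp_smul, smul_pow, smul_comm]
    exact smul_le_smul_of_nonneg_left h (by positivity)

lemma exists_lt_tvp_le_smul_of_lt (hm : 2 ≤ m) [Nonempty (Fin n)] (hC : ∀ g, 0 < C g)
    (hx : ∀ i, 0 < x i) (hle : tvp C x ≤ lam • x ^ (m - 1)) {i₀ : Fin n}
    (hlt : tvp C x i₀ < lam * x i₀ ^ (m - 1)) :
    ∃ lam' < lam, ∃ x' ∈ stdSimplex ℝ (Fin n), tvp C x' ≤ lam' • x' ^ (m - 1) := by
  have hpow : Tendsto (fun v => lam * v ^ (m - 1)) (𝓝[<] x i₀) (𝓝 (lam * x i₀ ^ (m - 1))) :=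
    ((by fun_prop : Continuous fun v : ℝ => lam * v ^ (m - 1)).tendsto _).mono_left
      nhdsWithin_le_nhds
  obtain ⟨v, ⟨hv0, hvx⟩, hv⟩ : ∃ v ∈ Set.Ioo 0 (x i₀), tvp C x i₀ < lam * v ^ (m - 1) :=
    ((show ∀ᶠ v in 𝓝[<] x i₀, v ∈ Set.Ioo 0 (x i₀) from Ioo_mem_nhdsLT (hx i₀)).and
      (hpow.eventually_const_lt hlt)).exists
  -- Lowering `x i₀` to `v` keeps slack at `i₀`, and creates slack everywhere else since `C > 0`.
  set x' := Function.update x i₀ v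
  have hx'pos (i : Fin n) : 0 < x' i := by
    by_cases hi : i = i₀
    · subst hi; simpa [x'] using hv0
    · simpa [x', hi] using hx i
  have hx'x : x' ≤ x := fun i => by
    by_cases hi : i = i₀
    · subst hi; simpa [x'] using hvx.le
    · simp [x', hi]
  have hdrop (i : Fin n) : tvp C x' i < tvp C x i :=
    tvp_lt_tvp hm hC (fun i => (hx'pos i).le) hx'x (j := i₀) (by simpa [x'] using hvx) i
  have hstrict (i : Fin n) : tvp C x' i < lam * x' i ^ (m - 1) := by
    by_cases hi : i = i₀
    · subst hi; simpa [x'] using (hdrop i).trans hv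
    · simpa [x', hi] using (hdrop i).trans_le (hle i)
  obtain ⟨lam', hlam', hle'⟩ := exists_lt_tvp_le_smul_of_forall_lt hstrict
  exact ⟨lam', hlam', exists_mem_stdSimplex_tvp_le hx'pos hle'⟩

theorem exists_pos_eigvec_of_pos (hm : 2 ≤ m) [Nonempty (Fin n)] (hC : ∀ g, 0 < C g) :
    ∃ lam > (0 : ℝ), ∃ x ∈ stdSimplex ℝ (Fin n), (∀ i, 0 < x i) ∧ tvp C x = lam • x ^ (m - 1) := by
  have hn : (0 : ℝ) < n := Nat.cast_pos.2 Fin.pos'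
  set u : Fin n → ℝ := fun _ => (n : ℝ)⁻¹
  have hu : u ∈ stdSimplex ℝ (Fin n) := ⟨fun _ => by positivity, by simp [u, hn.ne']⟩
  -- `Λ` only serves to make the feasible set compact.
  obtain ⟨Λ, hΛ⟩ := exists_tvp_le_smul C (x := u) fun _ => inv_pos.2 hn
  set K := (Set.Icc 0 Λ ×ˢ stdSimplex ℝ (Fin n)) ∩
    {p : ℝ × (Fin n → ℝ) | tvp C p.2 ≤ p.1 • p.2 ^ (m - 1)}
  have hK : IsCompact K := (isCompact_Icc.prod (isCompact_stdSimplex ℝ (Fin n))).inter_right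
    (isClosed_le (continuous_tvp.comp (continuous_const.prodMk continuous_snd)) (by fun_prop))
  have huK : (Λ, u) ∈ K := ⟨⟨⟨(pos_of_tvp_le hm hC hu hΛ).1.le, le_rfl⟩, hu⟩, hΛ⟩
  obtain ⟨⟨lam, x⟩, ⟨⟨hlam, hx⟩, hle⟩, hmin⟩ :=
    hK.exists_isMinOn ⟨_, huK⟩ continuous_fst.continuousOn
  obtain ⟨hlam0, hxpos⟩ := pos_of_tvp_le hm hC hx hle
  refine ⟨lam, hlam0, x, hx, hxpos, le_antisymm hle fun i₀ => not_lt.1 fun hlt => ?_⟩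
  obtain ⟨lam', hlt', x', hx', hle'⟩ := exists_lt_tvp_le_smul_of_lt hm hC hxpos hle hlt
  have hK' : (lam', x') ∈ K :=
    ⟨⟨⟨(pos_of_tvp_le hm hC hx' hle').1.le, hlt'.le.trans hlam.2⟩, hx'⟩, hle'⟩
  exact (hmin hK').not_gt hlt'

end Perron

section SpectralRadius

variable {C : (Fin m → Fin n) → ℝ}

lemma tvpC_ofReal (C : (Fin m → Fin n) → ℝ) (x : Fin n → ℝ) (i : Fin n) :
    tvpC C (fun j => (x j : ℂ)) i = tvp C x i := by
  simp only [tvpC, tvp, Complex.ofReal_sum, apply_ite ((↑) : ℝ → ℂ), Complex.ofReal_mul,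
    Complex.ofReal_prod, Complex.ofReal_zero]

lemma tEig_of_tvp_eq {x : Fin n → ℝ} (hx : x ≠ 0) {lam : ℝ} (h : tvp C x = lam • x ^ (m - 1)) :
    tEig C lam := by
  refine ⟨fun j => x j, fun h0 => hx (funext fun j => by simpa using congrFun h0 j), fun i => ?_⟩
  simp [tvpC_ofReal, h]

lemma norm_le_sum_of_tEig (hC : ∀ g, 0 ≤ C g) {lam : ℂ} (h : tEig C lam) : ‖lam‖ ≤ ∑ g, C g := by
  obtain ⟨x, hx0, hx⟩ := h
  obtain ⟨j, hj⟩ := Function.ne_iff.1 hx0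
  obtain ⟨i₀, -, hi₀⟩ := exists_max_image univ (fun j => ‖x j‖) ⟨j, mem_univ _⟩
  have hM : 0 < ‖x i₀‖ ^ (m - 1) := pow_pos ((norm_pos_iff.2 hj).trans_le (hi₀ j (mem_univ _))) _
  refine le_of_mul_le_mul_right ?_ hM
  calc ‖lam‖ * ‖x i₀‖ ^ (m - 1) = ‖tvpC C x i₀‖ := by rw [hx, norm_mul, norm_pow]
    _ ≤ ∑ g, C g * ‖x i₀‖ ^ (m - 1) := norm_sum_le_of_le _ fun g _ => by
        split_ifs
        · rw [norm_mul, norm_prod, Complex.norm_real, Real.norm_of_nonneg (hC g)]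
          refine mul_le_mul_of_nonneg_left ?_ (hC g)
          refine (prod_le_prod (fun _ _ => norm_nonneg _) fun _ _ => hi₀ _ (mem_univ _)).trans_eq ?_
          rw [prod_const, card_erase_of_mem (mem_univ _), card_univ, Fintype.card_fin]
        · simpa using mul_nonneg (hC g) hM.le
    _ = (∑ g, C g) * ‖x i₀‖ ^ (m - 1) := (sum_mul ..).symm

lemma norm_le_tRho (hC : ∀ g, 0 ≤ C g) {lam : ℂ} (h : tEig C lam) : ‖lam‖ ≤ tRho C :=
  le_csSup ⟨∑ g, C g, by rintro r ⟨l, hl, rfl⟩; exact norm_le_sum_of_tEig hC hl⟩ ⟨lam, h, rfl⟩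

lemma tRho_nonneg (C : (Fin m → Fin n) → ℝ) : 0 ≤ tRho C :=
  Real.sSup_nonneg (by rintro r ⟨lam, -, rfl⟩; exact norm_nonneg lam)

end SpectralRadius

lemma exists_eigvec_of_tendsto {C : (Fin m → Fin n) → ℝ} {Cs : ℕ → (Fin m → Fin n) → ℝ}
    (hCs : Tendsto Cs atTop (𝓝 C)) {lams : ℕ → ℝ} {xs : ℕ → Fin n → ℝ} {a b : ℝ}
    (hlam : ∀ k, lams k ∈ Set.Icc a b) (hxs : ∀ k, xs k ∈ stdSimplex ℝ (Fin n))
    (heig : ∀ k, tvp (Cs k) (xs k) = lams k • xs k ^ (m - 1)) :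
    ∃ lam ∈ Set.Icc a b, ∃ x ∈ stdSimplex ℝ (Fin n), tvp C x = lam • x ^ (m - 1) := by
  obtain ⟨⟨lam, x⟩, ⟨hlam, hx⟩, φ, hφ, hlim⟩ :=
    (isCompact_Icc.prod (isCompact_stdSimplex ℝ (Fin n))).tendsto_subseq
      (x := fun k => (lams k, xs k)) fun k => ⟨hlam k, hxs k⟩
  have hclosed : IsClosed {p : ((Fin m → Fin n) → ℝ) × ℝ × (Fin n → ℝ) |
      tvp p.1 p.2.2 = p.2.1 • p.2.2 ^ (m - 1)} :=
    isClosed_eq (continuous_tvp.comp (continuous_fst.prodMk (continuous_snd.comp continuous_snd)))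
      (by fun_prop)
  exact ⟨lam, hlam, x, hx, hclosed.mem_of_tendsto ((hCs.comp hφ.tendsto_atTop).prodMk_nhds hlim)
    (Eventually.of_forall fun k => heig (φ k))⟩

theorem exists_pos_majMat_mulVec_le (hm : 2 ≤ m) {B : (Fin m → Fin n) → ℝ} (hB : ∀ g, 0 ≤ B g)
    {s : ℝ} (hs : tRho B < s) :
    ∃ y : Fin n → ℝ, (∀ i, 0 < y i) ∧ ∃ r, 0 ≤ r ∧ r < s ∧ majMat B *ᵥ y ≤ r • y := by
  rcases isEmpty_or_nonempty (Fin n) with _ | _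
  · exact ⟨0, isEmptyElim, 0, le_rfl, (tRho_nonneg B).trans_lt hs, isEmptyElim⟩
  set Cs : ℕ → (Fin m → Fin n) → ℝ := fun k g => B g + 1 / (k + 1)
  have hCs (k : ℕ) (g : Fin m → Fin n) : 0 < Cs k g := by positivity [hB g]
  choose lams hlams xs hxs hxpos heig using fun k => exists_pos_eigvec_of_pos hm (hCs k)
  obtain ⟨k, hk⟩ : ∃ k, lams k < s := by
    by_contra! h
    have hε (k : ℕ) : (1 : ℝ) / (k + 1) ≤ 1 :=
      (div_le_one (by positivity)).2 (le_add_of_nonneg_left k.cast_nonneg)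
    have hbound (k : ℕ) : lams k ≤ ∑ g, (B g + 1) :=
      calc lams k ≤ ‖(lams k : ℂ)‖ := by rw [Complex.norm_real]; exact Real.le_norm_self _
        _ ≤ ∑ g, Cs k g := norm_le_sum_of_tEig (fun g => (hCs k g).le)
            (tEig_of_tvp_eq (ne_zero_of_mem_stdSimplex (hxs k)) (heig k))
        _ ≤ ∑ g, (B g + 1) := sum_le_sum fun g _ => add_le_add_right (hε k) _
    have hlim : Tendsto Cs atTop (𝓝 B) := tendsto_pi_nhds.2 fun g => by
      simpa [Cs] using (tendsto_one_div_add_atTop_nhds_zero_nat (𝕜 := ℝ)).const_add (B g)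
    obtain ⟨lam, hlam, x, hx, hBx⟩ :=
      exists_eigvec_of_tendsto hlim (fun k => ⟨h k, hbound k⟩) hxs heig
    have := norm_le_tRho hB (tEig_of_tvp_eq (ne_zero_of_mem_stdSimplex hx) hBx)
    rw [Complex.norm_real, Real.norm_of_nonneg ((tRho_nonneg B).trans (hs.le.trans hlam.1))] at this
    linarith [hlam.1]
  refine ⟨xs k ^ (m - 1), fun i => pow_pos (hxpos k i) _, lams k, (hlams k).le, hk, ?_⟩
  calc majMat B *ᵥ xs k ^ (m - 1) ≤ tvp B (xs k) := majMat_mulVec_pow_le_tvp hm hB (hxs k).1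
    _ ≤ tvp (Cs k) (xs k) :=
        tvp_mono_left (fun g => le_add_of_nonneg_right (by positivity)) (hxs k).1
    _ = lams k • xs k ^ (m - 1) := heig k

section Splitting

lemma idT_update_zero (g : Fin m → Fin n) (j : Fin n) :
    idT m n (Function.update g 0 j) = if ∀ k ≠ 0, g k = j then 1 else 0 := by
  simp only [idT, Function.update_self]
  congr 1
  simp [Function.update_apply, imp_iff_not_or, eq_comm]

lemma rowDiag_matTen_idT (P : Matrix (Fin n) (Fin n) ℝ) : rowDiag (matTen P (idT m n)) := by
  rintro g ⟨k, l, hk, hl, hkl⟩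
  refine sum_eq_zero fun j _ => ?_
  rw [idT_update_zero, if_neg fun h => hkl ((h k hk).trans (h l hl).symm), mul_zero]

lemma matTen_idT_of_forall_eq (hm : 2 ≤ m) (P : Matrix (Fin n) (Fin n) ℝ)
    {g : Fin m → Fin n} {c : Fin n} (hg : ∀ k ≠ 0, g k = c) : matTen P (idT m n) g = P (g 0) c := by
  have h1 := mk_one_ne_zero hm
  simp only [matTen, idT_update_zero]
  rw [sum_eq_single c (fun j _ hj => by
      rw [if_neg fun h => hj ((h _ h1).symm.trans (hg _ h1)), mul_zero]) (by simp), if_pos hg,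
    mul_one]

lemma majIdx_eq_self {g : Fin m → Fin n} {c : Fin n} (hg : ∀ k ≠ 0, g k = c) : majIdx (g 0) c = g :=
  funext fun k => by by_cases hk : k = 0 <;> simp [majIdx, hk, hg]

lemma majMat_idT (hm : 2 ≤ m) : majMat (idT m n) = 1 := by
  ext i j
  rw [majMat_apply, one_apply, idT]
  refine if_congr ⟨fun h => ?_, fun h k => by simp [majIdx, h]⟩ rfl rfl
  simpa [majIdx, mk_one_ne_zero hm] using (h ⟨1, hm⟩).symm

lemma majMat_smul_idT_sub (hm : 2 ≤ m) (s : ℝ) (B : (Fin m → Fin n) → ℝ) :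
    majMat (s • idT m n - B) = s • 1 - majMat B := by
  rw [← majMat_idT hm]
  rfl

lemma matTen_majMat_idT_sub_nonneg (hm : 2 ≤ m) {B : (Fin m → Fin n) → ℝ} (hB : ∀ g, 0 ≤ B g)
    (s : ℝ) (g : Fin m → Fin n) :
    0 ≤ matTen (majMat (s • idT m n - B)) (idT m n) g - (s • idT m n - B) g := by
  by_cases h : ∃ k l, k ≠ 0 ∧ l ≠ 0 ∧ g k ≠ g l
  · obtain ⟨k, l, hk, hl, hkl⟩ := h
    have hI : idT m n g = 0 := if_neg fun hc => hkl ((hc k).trans (hc l).symm)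
    simp [rowDiag_matTen_idT _ g ⟨k, l, hk, hl, hkl⟩, hI, hB g]
  · push Not at h
    have hg (k : Fin m) (hk : k ≠ 0) : g k = g ⟨1, hm⟩ := h k _ hk (mk_one_ne_zero hm)
    rw [matTen_idT_of_forall_eq hm _ hg, majMat_apply, majIdx_eq_self hg, sub_self]

end Splitting

end MTensor

theorem stmt4 {m n : ℕ} [NeZero m] (hm : 2 ≤ m)
    (A : (Fin m → Fin n) → ℝ) (hA : isNonsingMTensor A) :
    (∀ g, 0 ≤ matTen (majMat A) (idT m n) g - A g) ∧
    rowDiag (matTen (majMat A) (idT m n)) ∧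
    IsUnit (majMat A) ∧
    (∀ i j, 0 ≤ (majMat A)⁻¹ i j) := by
  obtain ⟨s, B, hB, hs, rfl⟩ := hA
  obtain ⟨y, hy, r, hr, hrs, hBy⟩ := MTensor.exists_pos_majMat_mulVec_le hm hB hs
  obtain ⟨G, hG, hG0⟩ :=
    Matrix.exists_nonneg_mul_eq_one_of_mulVec_le (M := majMat B) (fun i j => hB _) hy hr hrs hBy
  rw [← MTensor.majMat_smul_idT_sub hm] at hG
  exact ⟨MTensor.matTen_majMat_idT_sub_nonneg hm hB s, MTensor.rowDiag_matTen_idT _,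
    (isUnit_iff_isUnit_det _).2 (isUnit_det_of_right_inverse hG), by rwa [inv_eq_right_inv hG]⟩
end
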